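/- If a binary word f has a 2-tilde-error overlap with error block 101 aligned against 010 (type SR or RS with adjacent errors), i.e., f = w2·101·w3·w4 = w1·w2·010·w3 with |w1| = r, then f is tilde-non-isometric; in particular, α̃ = w1·w2·011·w3·w4 and β̃ = w1·w2·100·w3·w4 form a pair of tilde-witnesses for f. -/

import Mathlib

/-- Edit operations on binary words: `R i` flips the bit at position `i`,
`S i` swaps the (distinct) bits at positions `i` and `i+1`. Positions are 0-based. -/
inductive TOp where
  | R (i : ℕ)
  | S (i : ℕ)
deriving DecidableEq

namespace TOp

def apply : TOp → List Bool → List Bool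
  | R i, w => w.set i (!(w.getD i false))
  | S i, w => (w.set i (w.getD (i+1) false)).set (i+1) (w.getD i false)

def valid : TOp → List Bool → Prop
  | R i, w => i < w.length
  | S i, w => i + 1 < w.length ∧ w.getD i false ≠ w.getD (i+1) false

/-- The set of positions modified by an operation. -/
def positions : TOp → Finset ℕ
  | R i => {i}
  | S i => {i, i+1}

/-- The (leftmost) position of an operation. -/
def pos : TOp → ℕ
  | R i => i
  | S i => i

def isR : TOp → Prop
  | R _ => True
  | S _ => False

def isS : TOp → Prop
  | R _ => False
  | S _ => True

end TOp

/-- All operations of a sequence are valid when applied successively starting from `w`. -/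
def validSeq : List TOp → List Bool → Prop
  | [], _ => True
  | o :: os, w => o.valid w ∧ validSeq os (o.apply w)

def applySeq : List TOp → List Bool → List Bool
  | [], w => w
  | o :: os, w => applySeq os (o.apply w)

/-- `ops` is a tilde-transformation from `u` to `v`. -/
def Transforms (ops : List TOp) (u v : List Bool) : Prop :=
  validSeq ops u ∧ applySeq ops u = v

/-- The swap-mismatch (tilde) distance between two words. -/
noncomputable def tdist (u v : List Bool) : ℕ :=
  sInf { n | ∃ ops : List TOp, ops.length = n ∧ Transforms ops u v }

/-- Each position of the word is modified at most once along the sequence. -/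
def eachPosOnce (ops : List TOp) : Prop :=
  ops.Pairwise fun o o' => Disjoint o.positions o'.positions

/-- A minimal tilde-transformation: length `tdist u v`, each position changed at most once. -/
def MinimalTransf (ops : List TOp) (u v : List Bool) : Prop :=
  Transforms ops u v ∧ ops.length = tdist u v ∧ eachPosOnce ops

/-- The list of all words `w_0 = u, w_1, …, w_h` visited by the transformation. -/
def trajectory (ops : List TOp) (u : List Bool) : List (List Bool) :=
  List.scanl (fun w o => o.apply w) u ops

/-- `w` avoids `f` as a factor. -/
def FFree (f w : List Bool) : Prop := ¬ f <:+: w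

/-- All words along the transformation are `f`-free. -/
def FreeTransf (f : List Bool) (ops : List TOp) (u : List Bool) : Prop :=
  ∀ w ∈ trajectory ops u, FFree f w

/-- `f` is tilde-isometric. -/
def TildeIsometric (f : List Bool) : Prop :=
  ∀ u v : List Bool, u.length = v.length → f.length < u.length →
    FFree f u → FFree f v →
      ∃ ops : List TOp, MinimalTransf ops u v ∧ FreeTransf f ops u

/-- `(u,v)` is a pair of tilde-witnesses for `f`. -/
def Witnesses (f u v : List Bool) : Prop :=
  u.length = v.length ∧ FFree f u ∧ FFree f v ∧ 2 ≤ tdist u v ∧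
    ∀ ops : List TOp, MinimalTransf ops u v → ¬ FreeTransf f ops u

/-- Hamming distance between equal-length words (number of mismatch positions). -/
def hdist (u v : List Bool) : ℕ := ((u.zip v).filter fun p => p.1 != p.2).length

/-!
The words `α = w1 w2 011 w3 w4` and `β = w1 w2 100 w3 w4` differ exactly in the three positions
of the error block, so a minimal transformation between them is a swap and a flip there, and
whichever comes first produces `w1 f` or `f w4`.

The real work is to show that `α` and `β` avoid `f`. Put `r = |w1|`; the two factorisations say
that `f` has period `r` except at the three positions of the error block. An occurrence of `f`
in `α` at offset `0 < k < r` forces `f (j + k) = f j` except at a single target position, and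
`f (j + k - r) = f j` across the right end. On the window of the last `r` positions, read as a
function on `ZMod r`, this is invariance under `+ k` with at most one exceptional edge; since the
orbits of `+ k` are cycles, the exceptional edge is harmless. Two positions `x`, `x + r` where `f`
differs climb into the window in steps of `k` and land in the same orbit, a contradiction. For `β`
the same argument runs on `f` read backwards.
-/

theorem Function.periodic_of_forall_add_ne {A β : Type*} [AddGroup A] {G : A → β} {k v : A}
    (hk : IsOfFinAddOrder k) (h : ∀ c, c + k ≠ v → G (c + k) = G c) :
    Function.Periodic G k := by
  have horbit : ∀ j < addOrderOf k, G (v + j • k) = G v := by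
    intro j
    induction j with
    | zero => simp
    | succ j ih =>
      intro hj
      rw [succ_nsmul, ← add_assoc, h _ ?_, ih (by omega)]
      rw [add_assoc, ← succ_nsmul, Ne, add_eq_left]
      exact fun h0 => (addOrderOf_le_of_nsmul_eq_zero j.succ_pos h0).not_gt hj
  intro c
  by_cases hc : c + k = v
  · have hc' : c = v + (addOrderOf k - 1) • k := by
      rw [← hc, add_assoc, ← succ_nsmul', Nat.sub_add_cancel hk.addOrderOf_pos,
        addOrderOf_nsmul_eq_zero, add_zero]
    rw [hc, hc', horbit _ (by have := hk.addOrderOf_pos; omega)]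
  · exact h c hc

section CyclicShift

variable (F : ℕ → Bool) (n r : ℕ)

/-- `F` on the window `[n - r, n)`, which holds exactly one position of each residue mod `r`. -/
def windowVal (c : ZMod r) : Bool := F (n - r + (c - (n - r : ℕ)).val)

variable {F n r}

theorem windowVal_natCast {i : ℕ} (hi : n - r ≤ i) (hin : i < n) :
    windowVal F n r i = F i := by
  rw [windowVal, ← Nat.cast_sub hi, ZMod.val_natCast, Nat.mod_eq_of_lt (by omega)]
  congr 1
  omega

variable {k v : ℕ}

theorem windowVal_periodic (hkr : k < r) (hrn : r ≤ n)
    (hstep : ∀ j, j + k < n → j + k ≠ v → F (j + k) = F j)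
    (hwrap : ∀ j < n, n ≤ j + k → F (j + k - r) = F j) :
    Function.Periodic (windowVal F n r) k := by
  have : NeZero r := ⟨by omega⟩
  refine Function.periodic_of_forall_add_ne (v := (v : ZMod r)) (isOfFinAddOrder_of_finite _) ?_
  intro c hc
  obtain ⟨e, her, rfl⟩ : ∃ e < r, c = ((n - r + e : ℕ) : ZMod r) :=
    ⟨_, ZMod.val_lt (c - ((n - r : ℕ) : ZMod r)), by push_cast; simp⟩
  rw [← Nat.cast_add] at hc ⊢
  rw [windowVal_natCast (i := n - r + e) (by omega) (by omega)]
  by_cases hek : e + k < r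
  · rw [windowVal_natCast (by omega) (by omega)]
    exact hstep _ (by omega) (fun h => hc (by rw [h]))
  · have hmod : ((n - r + e + k : ℕ) : ZMod r) = ((n - r + e + k - r : ℕ) : ZMod r) := by
      rw [Nat.cast_sub (by omega)]
      simp
    rw [hmod, windowVal_natCast (by omega) (by omega)]
    exact hwrap _ (by omega) (by omega)

theorem windowVal_natCast_of_climb (hk : 0 < k) (hkr : k < r)
    (hper : Function.Periodic (windowVal F n r) k)
    (hstep : ∀ j, j + k < n → j + k ≠ v → F (j + k) = F j) {x : ℕ} (hx : x < n)
    (hxv : ∀ m, x + (m + 1) * k ≠ v) : windowVal F n r x = F x := by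
  obtain ⟨d, hd⟩ : ∃ d, n - x = d := ⟨_, rfl⟩
  induction d using Nat.strong_induction_on generalizing x with
  | _ d ih =>
    by_cases hw : n - r ≤ x
    · exact windowVal_natCast hw hx
    · have hxk : x + k < n := by omega
      have hnext := ih (n - (x + k)) (by omega) hxk
        (fun m h => hxv (m + 1) (by rw [← h]; ring)) rfl
      rw [← hstep x hxk (by simpa using hxv 0), ← hnext, Nat.cast_add, hper]

theorem apply_add_eq_of_cyclic_shift (hk : 0 < k) (hkr : k < r) {x : ℕ} (hxr : x + r < n)
    (hstep : ∀ j, j + k < n → j + k ≠ v → F (j + k) = F j)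
    (hwrap : ∀ j < n, n ≤ j + k → F (j + k - r) = F j)
    (hxv : ¬ k ∣ v - x) (hv : v < x + r + k) : F (x + r) = F x := by
  have hper := windowVal_periodic hkr (by omega) hstep hwrap
  rw [← windowVal_natCast_of_climb hk hkr hper hstep (x := x + r) hxr (fun m => by nlinarith),
    ← windowVal_natCast_of_climb hk hkr hper hstep (x := x) (by omega) ?_]
  · simp
  · intro m hm
    exact hxv ⟨m + 1, by rw [← hm]; ring_nf; omega⟩

theorem false_of_cyclic_shift (hk : 1 < k) (hkr : k < r)
    (hstep : ∀ j, j + k < n → j + k ≠ v → F (j + k) = F j)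
    (hwrap : ∀ j < n, n ≤ j + k → F (j + k - r) = F j) {x y : ℕ} (hx : x + r = v)
    (hy : y = x + 1 ∨ y + 1 = x) (hxn : x + r < n) (hyn : y + r < n) (hFx : F (x + r) ≠ F x)
    (hFy : F (y + r) ≠ F y) : False := by
  by_cases hdvd : k ∣ r
  · refine hFy (apply_add_eq_of_cyclic_shift (by omega) hkr hyn hstep hwrap ?_ (by omega))
    intro h
    have h1 : k ∣ 1 := by
      rcases hy with rfl | rfl
      · simpa [show r - (r - 1) = 1 by omega, show v - (x + 1) = r - 1 by omega]
          using Nat.dvd_sub hdvd h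
      · exact (Nat.dvd_add_right hdvd).mp (by rwa [show v - y = r + 1 by omega] at h)
    rw [Nat.dvd_one] at h1
    omega
  · exact hFx (apply_add_eq_of_cyclic_shift (by omega) hkr hxn hstep hwrap
      (by rwa [show v - x = r by omega]) (by omega))

theorem false_of_cyclic_shift_down {s u : ℕ} (hs : 1 < s) (hsr : s < r)
    (hstep : ∀ j < n, s ≤ j → j - s ≠ u → F (j - s) = F j)
    (hwrap : ∀ j < s, F (j + (r - s)) = F j) {y : ℕ} (hy : y = u + 1 ∨ y + 1 = u)
    (hun : u + r < n) (hyn : y + r < n) (hFu : F (u + r) ≠ F u) (hFy : F (y + r) ≠ F y) :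
    False := by
  refine false_of_cyclic_shift (F := fun i => F (n - 1 - i)) (n := n) (r := r) (k := s)
    (v := n - 1 - u) (x := n - 1 - u - r) (y := n - 1 - y - r) hs hsr (fun i hi hiv => ?_)
    (fun i hi hin => ?_) (by omega) (by omega) (by omega) (by omega) ?_ ?_
  · rw [← hstep (n - 1 - i) (by omega) (by omega) (by omega)]
    congr 1
    omega
  · rw [← hwrap (n - 1 - i) (by omega)]
    congr 1
    omega
  · rw [show n - 1 - (n - 1 - u - r + r) = u by omega,
      show n - 1 - (n - 1 - u - r) = u + r by omega]
    exact hFu.symm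
  · rw [show n - 1 - (n - 1 - y - r + r) = y by omega,
      show n - 1 - (n - 1 - y - r) = y + r by omega]
    exact hFy.symm

end CyclicShift

theorem getD_append_append_length_add {α : Type*} {P a T : List α} {d : α} {i : ℕ}
    (hi : i < a.length) : (P ++ a ++ T).getD (P.length + i) d = a.getD i d := by
  rw [List.append_assoc, List.getD_append_right _ _ _ _ (by omega), Nat.add_sub_cancel_left,
    List.getD_append _ _ _ _ hi]

theorem getD_append_triple (P T : List Bool) (x y z : Bool) :
    (P ++ [x, y, z] ++ T).getD P.length false = x ∧
      (P ++ [x, y, z] ++ T).getD (P.length + 1) false = y ∧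
      (P ++ [x, y, z] ++ T).getD (P.length + 2) false = z :=
  ⟨getD_append_append_length_add (i := 0) (by simp),
    getD_append_append_length_add (i := 1) (by simp),
    getD_append_append_length_add (i := 2) (by simp)⟩

theorem List.IsInfix.exists_getD_add {α : Type*} {f A : List α} (h : f <:+: A) (d : α) :
    ∃ k, k + f.length ≤ A.length ∧ ∀ j < f.length, A.getD (k + j) d = f.getD j d := by
  obtain ⟨x, y, rfl⟩ := h
  exact ⟨x.length, by simp, fun j hj => getD_append_append_length_add hj⟩

def mismatches (u v : List Bool) : Set ℕ := {i | u.getD i false ≠ v.getD i false}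

theorem mem_mismatches {u v : List Bool} {i : ℕ} :
    i ∈ mismatches u v ↔ u.getD i false ≠ v.getD i false := Iff.rfl

theorem getD_eq_of_not_mem_mismatches {u v : List Bool} {i : ℕ} (h : i ∉ mismatches u v) :
    u.getD i false = v.getD i false :=
  not_not.mp h

theorem eq_of_mismatches_eq {u v w : List Bool} (hv : v.length = u.length)
    (hw : w.length = u.length) (h : mismatches v u = mismatches w u) : v = w := by
  refine List.ext_getElem (hv.trans hw.symm) fun i hiv hiw => ?_
  have hi := Set.ext_iff.mp h i
  rw [mem_mismatches, mem_mismatches, List.getD_eq_getElem _ _ hiv,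
    List.getD_eq_getElem _ _ hiw] at hi
  revert hi
  cases v[i] <;> cases w[i] <;> simp

theorem mismatches_append_triple (P T : List Bool) (x y z x' y' z' : Bool) :
    mismatches (P ++ [x, y, z] ++ T) (P ++ [x', y', z'] ++ T) =
      {i | i = P.length ∧ x ≠ x' ∨ i = P.length + 1 ∧ y ≠ y' ∨
        i = P.length + 2 ∧ z ≠ z'} := by
  ext i
  rw [mem_mismatches, Set.mem_ofPred_eq]
  rcases Nat.lt_or_ge i P.length with hi | hi
  · rw [List.append_assoc, List.getD_append _ _ _ _ hi, List.append_assoc,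
      List.getD_append _ _ _ _ hi]
    exact iff_of_false (· rfl) (by omega)
  · obtain ⟨j, rfl⟩ := Nat.exists_eq_add_of_le hi
    rcases j with _ | _ | _ | j <;> simp [List.getElem?_append_right]

theorem getD_append_triple_eq {P T : List Bool} {x y z x' y' z' : Bool} {i : ℕ}
    (hx : i = P.length → x = x') (hy : i = P.length + 1 → y = y')
    (hz : i = P.length + 2 → z = z') :
    (P ++ [x, y, z] ++ T).getD i false = (P ++ [x', y', z'] ++ T).getD i false := by
  refine getD_eq_of_not_mem_mismatches ?_
  rw [mismatches_append_triple]
  rintro (⟨h, hne⟩ | ⟨h, hne⟩ | ⟨h, hne⟩)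
  exacts [hne (hx h), hne (hy h), hne (hz h)]

namespace TOp

theorem getD_apply_of_not_mem {o : TOp} {w : List Bool} {q : ℕ} (h : q ∉ o.positions) :
    (o.apply w).getD q false = w.getD q false := by
  cases o <;> grind [apply, positions]

theorem getD_apply_ne_of_mem {o : TOp} {w : List Bool} {q : ℕ} (hv : o.valid w)
    (h : q ∈ o.positions) : (o.apply w).getD q false ≠ w.getD q false := by
  cases o <;> grind [apply, positions, valid]

theorem mismatches_apply {o : TOp} {w : List Bool} (hv : o.valid w) :
    mismatches (o.apply w) w = o.positions := by
  ext q
  rw [mem_mismatches, Finset.mem_coe]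
  by_cases hq : q ∈ o.positions
  · exact iff_of_true (getD_apply_ne_of_mem hv hq) hq
  · exact iff_of_false (not_not.mpr (getD_apply_of_not_mem hq)) hq

theorem length_apply (o : TOp) (w : List Bool) : (o.apply w).length = w.length := by
  cases o <;> simp [apply]

end TOp

theorem getD_applySeq_of_forall_not_mem {ops : List TOp} {w : List Bool} {q : ℕ}
    (h : ∀ o ∈ ops, q ∉ o.positions) : (applySeq ops w).getD q false = w.getD q false := by
  induction ops generalizing w with
  | nil => rfl
  | cons o os ih =>
    simp only [List.forall_mem_cons] at h
    rw [applySeq, ih h.2, TOp.getD_apply_of_not_mem h.1]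

theorem mismatches_applySeq {ops : List TOp} {w : List Bool} (hv : validSeq ops w)
    (h : eachPosOnce ops) :
    mismatches (applySeq ops w) w = {q | ∃ o ∈ ops, q ∈ o.positions} := by
  induction ops generalizing w with
  | nil => ext; simp [mem_mismatches, applySeq]
  | cons o os ih =>
    obtain ⟨hdisj, hos⟩ := List.pairwise_cons.mp h
    ext q
    rw [mem_mismatches, Set.mem_ofPred_eq, applySeq]
    by_cases hq : q ∈ o.positions
    · have hq' : ∀ o' ∈ os, q ∉ o'.positions :=
        fun o' ho' => Finset.disjoint_left.mp (hdisj o' ho') hq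
      rw [getD_applySeq_of_forall_not_mem hq']
      exact iff_of_true (TOp.getD_apply_ne_of_mem hv.1 hq) ⟨o, List.mem_cons_self, hq⟩
    · rw [← TOp.getD_apply_of_not_mem (w := w) hq, ← mem_mismatches, ih hv.2 hos]
      simp [hq]

section SwapFlip

variable {P T : List Bool}

theorem mismatches_100_011 :
    mismatches (P ++ [true, false, false] ++ T) (P ++ [false, true, true] ++ T) =
      {q | q = P.length ∨ q = P.length + 1 ∨ q = P.length + 2} := by
  rw [mismatches_append_triple]
  simp

theorem exists_mem_positions_iff {ops : List TOp}
    (h : Transforms ops (P ++ [false, true, true] ++ T) (P ++ [true, false, false] ++ T))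
    (honce : eachPosOnce ops) (q : ℕ) :
    (∃ o ∈ ops, q ∈ o.positions) ↔
      q = P.length ∨ q = P.length + 1 ∨ q = P.length + 2 := by
  have hq := Set.ext_iff.mp (mismatches_applySeq h.1 honce) q
  rw [h.2, mismatches_100_011] at hq
  exact hq.symm

theorem two_le_length_of_transforms {ops : List TOp}
    (h : Transforms ops (P ++ [false, true, true] ++ T) (P ++ [true, false, false] ++ T)) :
    2 ≤ ops.length := by
  by_contra! hlen
  have honce : eachPosOnce ops := by
    match ops, hlen with
    | [], _ => exact List.Pairwise.nil
    | [_], _ => exact List.pairwise_singleton _ _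
  have hcover := exists_mem_positions_iff h honce
  have h0 := (hcover P.length).mpr (Or.inl rfl)
  have h1 := (hcover (P.length + 1)).mpr (Or.inr (Or.inl rfl))
  have h2 := (hcover (P.length + 2)).mpr (Or.inr (Or.inr rfl))
  match ops, hlen with
  | [], _ => simp at h0
  | [o], _ =>
    simp only [List.mem_singleton, exists_eq_left] at h0 h1 h2
    cases o <;> simp only [TOp.positions, Finset.mem_insert, Finset.mem_singleton] at h0 h1 h2 <;>
      omega

theorem transforms_swap_flip :
    Transforms [TOp.S P.length, TOp.R (P.length + 2)]
      (P ++ [false, true, true] ++ T) (P ++ [true, false, false] ++ T) := by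
  obtain ⟨hα0, hα1, -⟩ := getD_append_triple P T false true true
  have hvalid :
      validSeq [TOp.S P.length, TOp.R (P.length + 2)] (P ++ [false, true, true] ++ T) := by
    refine ⟨⟨by simp, by rw [hα0, hα1]; decide⟩, ?_, trivial⟩
    show P.length + 2 < _
    simp [TOp.length_apply]
  refine ⟨hvalid, eq_of_mismatches_eq (u := P ++ [false, true, true] ++ T)
    (by simp [applySeq, TOp.length_apply]) (by simp) ?_⟩
  rw [mismatches_applySeq hvalid (by simp [eachPosOnce, TOp.positions]), mismatches_100_011]
  ext q
  simp [TOp.positions, or_assoc]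

theorem tdist_011_100 :
    tdist (P ++ [false, true, true] ++ T) (P ++ [true, false, false] ++ T) = 2 :=
  le_antisymm (Nat.sInf_le ⟨_, rfl, transforms_swap_flip⟩)
    (le_csInf ⟨2, _, rfl, transforms_swap_flip⟩
      fun _ ⟨_, hlen, htr⟩ => hlen ▸ two_le_length_of_transforms htr)

theorem first_op_of_transforms {o1 o2 : TOp}
    (htr : Transforms [o1, o2] (P ++ [false, true, true] ++ T) (P ++ [true, false, false] ++ T))
    (honce : eachPosOnce [o1, o2]) : o1 = TOp.S P.length ∨ o1 = TOp.R (P.length + 2) := by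
  have hcover := exists_mem_positions_iff htr honce
  have hdisj : Disjoint o1.positions o2.positions := by simpa [eachPosOnce] using honce
  obtain ⟨-, hα1, hα2⟩ := getD_append_triple P T false true true
  have h0 := (hcover P.length).mpr (Or.inl rfl)
  have h1 := (hcover (P.length + 1)).mpr (Or.inr (Or.inl rfl))
  have h2 := (hcover (P.length + 2)).mpr (Or.inr (Or.inr rfl))
  simp only [List.mem_cons, List.not_mem_nil, or_false, exists_eq_or_imp, exists_eq_left]
    at h0 h1 h2
  have hcover1 := fun q (hq : q ∈ o1.positions) => (hcover q).mp ⟨o1, List.mem_cons_self, hq⟩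
  have hcover2 := fun q (hq : q ∈ o2.positions) => (hcover q).mp ⟨o2, by simp, hq⟩
  cases o1 with
  | R i =>
    have hi := hcover1 i (by simp [TOp.positions])
    cases o2 with
    | R j =>
      simp only [TOp.positions, Finset.mem_singleton] at h0 h1 h2
      omega
    | S j =>
      simp only [TOp.positions, Finset.mem_insert, Finset.mem_singleton] at h0 h1 h2
      rcases (by omega : i = P.length + 2 ∨ i = P.length ∧ j = P.length + 1) with
        rfl | ⟨rfl, rfl⟩
      · exact Or.inr rfl
      -- `S (p + 1)` would swap the two equal bits `11`
      · refine absurd ?_ htr.1.2.1.2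
        rw [TOp.getD_apply_of_not_mem (by simp only [TOp.positions, Finset.mem_singleton]; omega),
          TOp.getD_apply_of_not_mem (by simp only [TOp.positions, Finset.mem_singleton]; omega),
          hα1, hα2]
  | S i =>
    have hi := hcover1 i (by simp [TOp.positions])
    cases o2 with
    | R j =>
      simp only [TOp.positions, Finset.mem_insert, Finset.mem_singleton] at h0 h1 h2
      rcases (by omega : i = P.length ∨ i = P.length + 1) with rfl | rfl
      · exact Or.inl rfl
      -- `S (p + 1)` would swap the two equal bits `11`
      · exact absurd (hα1.trans hα2.symm) htr.1.1.2
    | S j =>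
      have hi' := hcover1 (i + 1) (by simp [TOp.positions])
      have hj := hcover2 j (by simp [TOp.positions])
      have hj' := hcover2 (j + 1) (by simp [TOp.positions])
      simp only [TOp.positions, Finset.disjoint_insert_left, Finset.disjoint_singleton_left,
        Finset.mem_insert, Finset.mem_singleton] at hdisj
      omega

theorem mem_trajectory_of_minimalTransf {ops : List TOp}
    (h : MinimalTransf ops (P ++ [false, true, true] ++ T) (P ++ [true, false, false] ++ T)) :
    P ++ [true, false, true] ++ T ∈ trajectory ops (P ++ [false, true, true] ++ T) ∨
      P ++ [false, true, false] ++ T ∈ trajectory ops (P ++ [false, true, true] ++ T) := by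
  set α := P ++ [false, true, true] ++ T
  obtain ⟨htr, hlen, honce⟩ := h
  rw [tdist_011_100] at hlen
  obtain ⟨o1, o2, rfl⟩ := List.length_eq_two.mp hlen
  have hmem : o1.apply α ∈ trajectory [o1, o2] α := by simp [trajectory]
  have hmid : ∀ w, w.length = α.length → mismatches w α = o1.positions → o1.apply α = w :=
    fun w hw hm => eq_of_mismatches_eq (TOp.length_apply _ _) hw
      ((TOp.mismatches_apply htr.1.1).trans hm.symm)
  rcases first_op_of_transforms htr honce with rfl | rfl
  · refine Or.inl (hmid (P ++ [true, false, true] ++ T) (by simp [α]) ?_ ▸ hmem)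
    rw [mismatches_append_triple]
    ext
    simp [TOp.positions]
  · refine Or.inr (hmid (P ++ [false, true, false] ++ T) (by simp [α]) ?_ ▸ hmem)
    rw [mismatches_append_triple]
    ext
    simp [TOp.positions]

end SwapFlip

section Overlap

variable {f w1 w2 w3 w4 : List Bool}

theorem length_eq_of_overlap (h1 : f = w2 ++ [true, false, true] ++ w3 ++ w4)
    (h2 : f = w1 ++ w2 ++ [false, true, false] ++ w3) :
    w4.length = w1.length ∧ f.length = w1.length + w2.length + 3 + w3.length := by
  have l1 := congrArg List.length h1
  have l2 := congrArg List.length h2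
  simp only [List.length_append, List.length_cons, List.length_nil] at l1 l2
  omega

theorem getD_of_overlap (h1 : f = w2 ++ [true, false, true] ++ w3 ++ w4)
    (h2 : f = w1 ++ w2 ++ [false, true, false] ++ w3) :
    f.getD w2.length false = true ∧ f.getD (w2.length + 1) false = false ∧
      f.getD (w2.length + 2) false = true ∧ f.getD (w1.length + w2.length) false = false ∧
      f.getD (w1.length + w2.length + 1) false = true ∧
      f.getD (w1.length + w2.length + 2) false = false := by
  obtain ⟨a0, a1, a2⟩ := getD_append_triple w2 (w3 ++ w4) true false true
  obtain ⟨b0, b1, b2⟩ := getD_append_triple (w1 ++ w2) w3 false true false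
  rw [← List.append_assoc, ← h1] at a0 a1 a2
  rw [← h2, List.length_append] at b0 b1 b2
  exact ⟨a0, a1, a2, b0, b1, b2⟩

theorem getD_block_eq_getD_of_lt (h2 : f = w1 ++ w2 ++ [false, true, false] ++ w3)
    {x y z : Bool} {i : ℕ} (hi : i < f.length) (hx : i = w1.length + w2.length → x = false)
    (hy : i = w1.length + w2.length + 1 → y = true)
    (hz : i = w1.length + w2.length + 2 → z = false) :
    (w1 ++ w2 ++ [x, y, z] ++ w3 ++ w4).getD i false = f.getD i false := by
  have e : f ++ w4 = (w1 ++ w2) ++ [false, true, false] ++ (w3 ++ w4) := by simp [h2]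
  rw [← List.getD_append f w4 _ _ hi, e, show w1 ++ w2 ++ [x, y, z] ++ w3 ++ w4 =
    (w1 ++ w2) ++ [x, y, z] ++ (w3 ++ w4) by simp]
  exact getD_append_triple_eq (by simpa using hx) (by simpa using hy) (by simpa using hz)

theorem getD_block_eq_getD_sub_of_le (h1 : f = w2 ++ [true, false, true] ++ w3 ++ w4)
    {x y z : Bool} {i : ℕ} (hi : w1.length ≤ i) (hx : i = w1.length + w2.length → x = true)
    (hy : i = w1.length + w2.length + 1 → y = false)
    (hz : i = w1.length + w2.length + 2 → z = true) :
    (w1 ++ w2 ++ [x, y, z] ++ w3 ++ w4).getD i false = f.getD (i - w1.length) false := by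
  have e : w1 ++ f = (w1 ++ w2) ++ [true, false, true] ++ (w3 ++ w4) := by simp [h1]
  rw [← List.getD_append_right w1 f _ _ hi, e, show w1 ++ w2 ++ [x, y, z] ++ w3 ++ w4 =
    (w1 ++ w2) ++ [x, y, z] ++ (w3 ++ w4) by simp]
  exact getD_append_triple_eq (by simpa using hx) (by simpa using hy) (by simpa using hz)

theorem exists_offset_of_infix_block (h1 : f = w2 ++ [true, false, true] ++ w3 ++ w4)
    (h2 : f = w1 ++ w2 ++ [false, true, false] ++ w3) {x y z : Bool}
    (h : f <:+: w1 ++ w2 ++ [x, y, z] ++ w3 ++ w4) :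
    ∃ k ≤ w1.length, ∀ j < f.length,
      (w1 ++ w2 ++ [x, y, z] ++ w3 ++ w4).getD (k + j) false = f.getD j false := by
  obtain ⟨hw4, hn⟩ := length_eq_of_overlap h1 h2
  obtain ⟨k, hk, hocc⟩ := h.exists_getD_add false
  refine ⟨k, ?_, hocc⟩
  simp only [List.length_append, List.length_cons, List.length_nil] at hk
  omega

theorem not_infix_011 (h1 : f = w2 ++ [true, false, true] ++ w3 ++ w4)
    (h2 : f = w1 ++ w2 ++ [false, true, false] ++ w3) :
    ¬ f <:+: w1 ++ w2 ++ [false, true, true] ++ w3 ++ w4 := by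
  obtain ⟨-, hn⟩ := length_eq_of_overlap h1 h2
  obtain ⟨b0, b1, b2, c0, c1, c2⟩ := getD_of_overlap h1 h2
  intro hocc
  obtain ⟨k, hk, hocc⟩ := exists_offset_of_infix_block h1 h2 hocc
  set r := w1.length
  set l2 := w2.length
  set n := f.length
  have hU : ∀ i < n, i ≠ r + l2 + 2 →
      (w1 ++ w2 ++ [false, true, true] ++ w3 ++ w4).getD i false = f.getD i false :=
    fun i hi hiv => getD_block_eq_getD_of_lt h2 hi (fun _ => rfl) (fun _ => rfl) (absurd · hiv)
  have hV : ∀ i, r ≤ i → i ≠ r + l2 → i ≠ r + l2 + 1 →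
      (w1 ++ w2 ++ [false, true, true] ++ w3 ++ w4).getD i false = f.getD (i - r) false :=
    fun i hi hi0 hi1 => getD_block_eq_getD_sub_of_le h1 hi (absurd · hi0) (absurd · hi1)
      (fun _ => rfl)
  have hstep :
      ∀ j, j + k < n → j + k ≠ r + l2 + 2 → f.getD (j + k) false = f.getD j false :=
    fun j hj hjv => by rw [← hocc j (by omega), ← hU _ hj hjv, add_comm]
  have hwrap : ∀ j < n, n ≤ j + k → f.getD (j + k - r) false = f.getD j false :=
    fun j hj hjk => by rw [← hocc j hj, ← hV _ (by omega) (by omega) (by omega), add_comm]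
  rcases (by omega : k = 0 ∨ k = 1 ∨ k = r ∨ 1 < k ∧ k < r) with
    rfl | rfl | rfl | ⟨hk1, hkr⟩
  · have := hocc (r + l2 + 2) (by omega)
    rw [zero_add, hV _ (by omega) (by omega) (by omega), show r + l2 + 2 - r = l2 + 2 by omega,
      b2, c2] at this
    exact Bool.noConfusion this
  · have := hstep (r + l2) (by omega) (by omega)
    rw [c1, c0] at this
    exact Bool.noConfusion this
  · have := hocc l2 (by omega)
    rw [hU _ (by omega) (by omega), b0, c0] at this
    exact Bool.noConfusion this
  · refine false_of_cyclic_shift (F := (f.getD · false)) (x := l2 + 2) (y := l2 + 1) hk1 hkr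
      hstep hwrap (by omega) (Or.inr rfl) (by omega) (by omega) ?_ ?_
    · rw [show l2 + 2 + r = r + l2 + 2 by omega, c2, b2]
      decide
    · rw [show l2 + 1 + r = r + l2 + 1 by omega, c1, b1]
      decide

theorem not_infix_100 (h1 : f = w2 ++ [true, false, true] ++ w3 ++ w4)
    (h2 : f = w1 ++ w2 ++ [false, true, false] ++ w3) :
    ¬ f <:+: w1 ++ w2 ++ [true, false, false] ++ w3 ++ w4 := by
  obtain ⟨-, hn⟩ := length_eq_of_overlap h1 h2
  obtain ⟨b0, b1, b2, c0, c1, c2⟩ := getD_of_overlap h1 h2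
  intro hocc
  obtain ⟨k, hk, hocc⟩ := exists_offset_of_infix_block h1 h2 hocc
  set r := w1.length
  set l2 := w2.length
  set n := f.length
  have hU : ∀ i < n, i ≠ r + l2 → i ≠ r + l2 + 1 →
      (w1 ++ w2 ++ [true, false, false] ++ w3 ++ w4).getD i false = f.getD i false :=
    fun i hi hi0 hi1 => getD_block_eq_getD_of_lt h2 hi (absurd · hi0) (absurd · hi1)
      (fun _ => rfl)
  have hV : ∀ i, r ≤ i → i ≠ r + l2 + 2 →
      (w1 ++ w2 ++ [true, false, false] ++ w3 ++ w4).getD i false = f.getD (i - r) false :=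
    fun i hi hiv => getD_block_eq_getD_sub_of_le h1 hi (fun _ => rfl) (fun _ => rfl)
      (absurd · hiv)
  rcases (by omega : k = 0 ∨ k = r ∨ k + 1 = r ∨ 0 < k ∧ k + 1 < r) with
    rfl | rfl | hk1 | ⟨hk0, hkr⟩
  · have := hocc (r + l2) (by omega)
    rw [zero_add, hV _ (by omega) (by omega), show r + l2 - r = l2 by omega, b0, c0] at this
    exact Bool.noConfusion this
  · have := hocc (l2 + 2) (by omega)
    rw [hU _ (by omega) (by omega) (by omega), show r + (l2 + 2) = r + l2 + 2 by omega, b2,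
      c2] at this
    exact Bool.noConfusion this
  · have := hocc (l2 + 1) (by omega)
    rw [hV _ (by omega) (by omega), show k + (l2 + 1) - r = l2 by omega, b0, b1] at this
    exact Bool.noConfusion this
  have hstep : ∀ j < n, r - k ≤ j → j - (r - k) ≠ l2 + 2 →
      f.getD (j - (r - k)) false = f.getD j false := by
    intro j hj hjs hju
    rw [← hocc j hj, hV _ (by omega) (by omega), show k + j - r = j - (r - k) by omega]
  have hwrap : ∀ j < r - k, f.getD (j + (r - (r - k))) false = f.getD j false := by
    intro j hj
    rw [← hocc j (by omega), hU _ (by omega) (by omega) (by omega),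
      show j + (r - (r - k)) = k + j by omega]
  refine false_of_cyclic_shift_down (F := (f.getD · false)) (u := l2 + 2) (y := l2 + 1)
    (by omega) (by omega) hstep hwrap (Or.inr rfl) (by omega) (by omega) ?_ ?_
  · rw [show l2 + 2 + r = r + l2 + 2 by omega, c2, b2]
    decide
  · rw [show l2 + 1 + r = r + l2 + 1 by omega, c1, b1]
    decide

end Overlap

theorem stmt16 (f w1 w2 w3 w4 : List Bool)
    (h1 : f = w2 ++ [true, false, true] ++ w3 ++ w4)
    (h2 : f = w1 ++ w2 ++ [false, true, false] ++ w3) :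
    ¬ TildeIsometric f ∧
    Witnesses f (w1 ++ w2 ++ [false, true, true] ++ w3 ++ w4)
                (w1 ++ w2 ++ [true, false, false] ++ w3 ++ w4) := by
  obtain ⟨hw4, hn⟩ := length_eq_of_overlap h1 h2
  obtain ⟨b0, -, -, c0, -, -⟩ := getD_of_overlap h1 h2
  have hr : w1.length ≠ 0 := fun h => by rw [h, zero_add, b0] at c0; exact Bool.noConfusion c0
  have e : ∀ a, w1 ++ w2 ++ a ++ w3 ++ w4 = (w1 ++ w2) ++ a ++ (w3 ++ w4) := by simp
  have hlen : (w1 ++ w2 ++ [false, true, true] ++ w3 ++ w4).length =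
      (w1 ++ w2 ++ [true, false, false] ++ w3 ++ w4).length := by simp
  have hblocked : ∀ ops, MinimalTransf ops (w1 ++ w2 ++ [false, true, true] ++ w3 ++ w4)
      (w1 ++ w2 ++ [true, false, false] ++ w3 ++ w4) →
      ¬ FreeTransf f ops (w1 ++ w2 ++ [false, true, true] ++ w3 ++ w4) := by
    intro ops hmin hfree
    rw [e, e] at hmin
    rw [e] at hfree
    rcases mem_trajectory_of_minimalTransf hmin with h | h
    · exact hfree _ h ⟨w1, [], by simp [h1]⟩
    · exact hfree _ h ⟨[], w4, by simp [h2]⟩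
  refine ⟨fun hiso => ?_, hlen, not_infix_011 h1 h2, not_infix_100 h1 h2,
    by rw [e, e, tdist_011_100], hblocked⟩
  have hlt : f.length < (w1 ++ w2 ++ [false, true, true] ++ w3 ++ w4).length := by
    simp only [List.length_append, List.length_cons, List.length_nil]
    omega
  obtain ⟨ops, hmin, hfree⟩ := hiso _ _ hlen hlt (not_infix_011 h1 h2) (not_infix_100 h1 h2)
  exact hblocked ops hmin hfree
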